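/- Let λ > 0 and κ > 2, and let C_SCAD : ℝ → ℝ be the SCAD cost. For every u ∈ ℝ, the piecewise value T(u), defined by T(u) = 0 if |u| ≤ λ; T(u) = u − λ·sign(u) if λ ≤ |u| ≤ 2λ; T(u) = ((κ − 1)·u − κλ·sign(u))/(κ − 2) if 2λ ≤ |u| ≤ κλ; and T(u) = u if |u| ≥ κλ, is a minimizer over a ∈ ℝ of the function f(a) = (1/2)(u − a)² + λ·C_SCAD(a). -/
import Mathlib
set_option maxHeartbeats 1000000


/-- The SCAD (smoothly clipped absolute deviations) cost with parameters
`λ > 0` and `κ`: an even function equal to `|a|` for `|a| ≤ λ`, to a quadratic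
transition for `λ < |a| ≤ κλ`, and constant `(λ/2)(1 + κ)` for `|a| > κλ`. -/
noncomputable def scadCost (lam κ a : ℝ) : ℝ :=
  if |a| ≤ lam then |a|
  else if |a| ≤ κ * lam then
    (1 / ((κ - 1) * lam)) * (|a| * κ * lam - |a|^2 / 2 - lam^2 / 2)
  else (lam / 2) * (1 + κ)

lemma scad_neg (lam κ a : ℝ) : scadCost lam κ (-a) = scadCost lam κ a := by
  simp [scadCost]

lemma scad_key1 (lam κ u b : ℝ) (hlam : 0 < lam) (hκ : 2 < κ) (hu : 0 ≤ u) (hb : 0 ≤ b)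
    (h1 : u ≤ lam) :
    (1/2)*(u-(0:ℝ))^2 + lam * scadCost lam κ 0 ≤ (1/2)*(u-b)^2 + lam * scadCost lam κ b := by
  have hk1 : (0:ℝ) < κ - 1 := by linarith
  have hk2 : (0:ℝ) < κ - 2 := by linarith
  have hD : (0:ℝ) < (κ-1)*(κ-2)^2 := by positivity
  have hbabs : |b| = b := abs_of_nonneg hb
  simp only [scadCost, hbabs, abs_zero, if_pos hlam.le]
  by_cases hb1 : b ≤ lam
  · rw [if_pos hb1]
    have hQ : (0:ℝ) ≤ ((κ-1)*(κ-2)^2) * (b^2/2 + b*(lam-u)) := by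
      nlinarith [mul_nonneg hD.le (mul_nonneg hb (by linarith : (0:ℝ) ≤ lam - u)),
        mul_nonneg hD.le (sq_nonneg b)]
    have e : (1/2)*(u-b)^2 + lam * b - ((1/2)*(u-(0:ℝ))^2 + lam * 0)
        = (((κ-1)*(κ-2)^2) * (b^2/2 + b*(lam-u))) / ((κ-1)*(κ-2)^2) := by
      field_simp
      ring
    linarith [e, div_nonneg hQ hD.le]
  · rw [if_neg hb1]
    by_cases hb2 : b ≤ κ*lam
    · rw [if_pos hb2]
      have hQ : (0:ℝ) ≤ (κ-2)^2 * ((κ-2)*b^2/2 + (κ-1)*(b*(lam-u)) + lam*(b-lam) + lam^2/2) := by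
        nlinarith [mul_nonneg (mul_nonneg (sq_nonneg (κ-2)) hk2.le) (sq_nonneg b),
          mul_nonneg (mul_nonneg (sq_nonneg (κ-2)) hk1.le) (mul_nonneg hb (by linarith : (0:ℝ) ≤ lam - u)),
          mul_nonneg (mul_nonneg (sq_nonneg (κ-2)) hlam.le) (by linarith [not_le.1 hb1] : (0:ℝ) ≤ b - lam),
          mul_nonneg (sq_nonneg (κ-2)) (sq_nonneg lam)]
      have e : (1/2)*(u-b)^2 + lam * ((1/((κ-1)*lam)) * (b*κ*lam - b^2/2 - lam^2/2))
          - ((1/2)*(u-(0:ℝ))^2 + lam * 0)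
          = ((κ-2)^2 * ((κ-2)*b^2/2 + (κ-1)*(b*(lam-u)) + lam*(b-lam) + lam^2/2)) / ((κ-1)*(κ-2)^2) := by
        field_simp
        ring
      linarith [e, div_nonneg hQ hD.le]
    · rw [if_neg hb2]
      have hb2' : κ*lam < b := not_le.1 hb2
      have hQ : (0:ℝ) ≤ ((κ-1)*(κ-2)^2) * (b*(lam-u) + b*(b-2*lam)/2 + lam^2*(1+κ)/2) := by
        nlinarith [mul_nonneg hD.le (mul_nonneg hb (by linarith : (0:ℝ) ≤ lam - u)),
          mul_nonneg hD.le (mul_nonneg hb (by nlinarith : (0:ℝ) ≤ b - 2*lam)),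
          mul_nonneg hD.le (mul_nonneg (sq_nonneg lam) (by linarith : (0:ℝ) ≤ 1 + κ))]
      have e : (1/2)*(u-b)^2 + lam * ((lam/2)*(1+κ)) - ((1/2)*(u-(0:ℝ))^2 + lam * 0)
          = (((κ-1)*(κ-2)^2) * (b*(lam-u) + b*(b-2*lam)/2 + lam^2*(1+κ)/2)) / ((κ-1)*(κ-2)^2) := by
        field_simp
        ring
      linarith [e, div_nonneg hQ hD.le]

lemma scad_key2 (lam κ u b : ℝ) (hlam : 0 < lam) (hκ : 2 < κ) (hu : 0 ≤ u) (hb : 0 ≤ b)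
    (h1 : lam < u) (h2 : u ≤ 2*lam) :
    (1/2)*(u-(u-lam))^2 + lam * scadCost lam κ (u-lam)
      ≤ (1/2)*(u-b)^2 + lam * scadCost lam κ b := by
  have hk1 : (0:ℝ) < κ - 1 := by linarith
  have hk2 : (0:ℝ) < κ - 2 := by linarith
  have hD : (0:ℝ) < (κ-1)*(κ-2)^2 := by positivity
  have hbabs : |b| = b := abs_of_nonneg hb
  have hTa : |u - lam| = u - lam := abs_of_nonneg (by linarith)
  simp only [scadCost, hbabs, hTa, if_pos (show u - lam ≤ lam by linarith)]
  by_cases hb1 : b ≤ lam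
  · rw [if_pos hb1]
    have hQ : (0:ℝ) ≤ ((κ-1)*(κ-2)^2) * ((u-b-lam)^2/2) := by
      nlinarith [mul_nonneg hD.le (sq_nonneg (u-b-lam))]
    have e : (1/2)*(u-b)^2 + lam * b - ((1/2)*(u-(u-lam))^2 + lam * (u-lam))
        = (((κ-1)*(κ-2)^2) * ((u-b-lam)^2/2)) / ((κ-1)*(κ-2)^2) := by
      field_simp
      ring
    linarith [e, div_nonneg hQ hD.le]
  · rw [if_neg hb1]
    have hb1' : lam < b := not_le.1 hb1
    by_cases hb2 : b ≤ κ*lam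
    · rw [if_pos hb2]
      have hQ : (0:ℝ) ≤ (κ-2)^2 * ((κ-2)*(b-lam)^2/2 + (κ-1)*((2*lam-u)*(b-lam)) + (κ-1)*(u-2*lam)^2/2) := by
        nlinarith [mul_nonneg (mul_nonneg (sq_nonneg (κ-2)) hk2.le) (sq_nonneg (b-lam)),
          mul_nonneg (mul_nonneg (sq_nonneg (κ-2)) hk1.le)
            (mul_nonneg (by linarith : (0:ℝ) ≤ 2*lam-u) (by linarith : (0:ℝ) ≤ b-lam)),
          mul_nonneg (mul_nonneg (sq_nonneg (κ-2)) hk1.le) (sq_nonneg (u-2*lam))]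
      have e : (1/2)*(u-b)^2 + lam * ((1/((κ-1)*lam)) * (b*κ*lam - b^2/2 - lam^2/2))
          - ((1/2)*(u-(u-lam))^2 + lam * (u-lam))
          = ((κ-2)^2 * ((κ-2)*(b-lam)^2/2 + (κ-1)*((2*lam-u)*(b-lam)) + (κ-1)*(u-2*lam)^2/2)) / ((κ-1)*(κ-2)^2) := by
        field_simp
        ring
      linarith [e, div_nonneg hQ hD.le]
    · rw [if_neg hb2]
      have hb2' : κ*lam < b := not_le.1 hb2
      have hQ : (0:ℝ) ≤ ((κ-1)*(κ-2)^2) * ((u-b)^2/2 + lam*(2*lam-u) + lam^2*(κ-2)/2) := by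
        nlinarith [mul_nonneg hD.le (sq_nonneg (u-b)),
          mul_nonneg hD.le (mul_nonneg hlam.le (by linarith : (0:ℝ) ≤ 2*lam-u)),
          mul_nonneg hD.le (mul_nonneg (sq_nonneg lam) hk2.le)]
      have e : (1/2)*(u-b)^2 + lam * ((lam/2)*(1+κ)) - ((1/2)*(u-(u-lam))^2 + lam * (u-lam))
          = (((κ-1)*(κ-2)^2) * ((u-b)^2/2 + lam*(2*lam-u) + lam^2*(κ-2)/2)) / ((κ-1)*(κ-2)^2) := by
        field_simp
        ring
      linarith [e, div_nonneg hQ hD.le]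

lemma scad_key3 (lam κ u b : ℝ) (hlam : 0 < lam) (hκ : 2 < κ) (hu : 0 ≤ u) (hb : 0 ≤ b)
    (h2 : 2*lam < u) (h3 : u ≤ κ*lam) :
    (1/2)*(u-((κ-1)*u - κ*lam)/(κ-2))^2 + lam * scadCost lam κ (((κ-1)*u - κ*lam)/(κ-2))
      ≤ (1/2)*(u-b)^2 + lam * scadCost lam κ b := by
  have hk1 : (0:ℝ) < κ - 1 := by linarith
  have hk2 : (0:ℝ) < κ - 2 := by linarith
  have hD : (0:ℝ) < (κ-1)*(κ-2)^2 := by positivity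
  have hbabs : |b| = b := abs_of_nonneg hb
  have hTnum : 0 ≤ (κ-1)*u - κ*lam := by nlinarith
  have hTa : |((κ-1)*u - κ*lam)/(κ-2)| = ((κ-1)*u - κ*lam)/(κ-2) :=
    abs_of_nonneg (div_nonneg hTnum hk2.le)
  have hTgt : lam < ((κ-1)*u - κ*lam)/(κ-2) := by
    rw [lt_div_iff₀ hk2]; nlinarith
  have hTle : ((κ-1)*u - κ*lam)/(κ-2) ≤ κ*lam := by
    rw [div_le_iff₀ hk2]; nlinarith
  simp only [scadCost, hbabs, hTa, if_neg (not_le.2 hTgt), if_pos hTle]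
  by_cases hb1 : b ≤ lam
  · rw [if_pos hb1]
    have hQ : (0:ℝ) ≤ ((κ-1)*(κ-2)^2) * ((lam-b)*(2*u-b-3*lam))/2 + ((κ-1)^2*(κ-2)) * (u-2*lam)^2/2 := by
      nlinarith [mul_nonneg hD.le
          (mul_nonneg (by linarith : (0:ℝ) ≤ lam - b) (by linarith : (0:ℝ) ≤ 2*u-b-3*lam)),
        mul_nonneg (mul_nonneg (sq_nonneg (κ-1)) hk2.le) (sq_nonneg (u-2*lam))]
    have e : (1/2)*(u-b)^2 + lam * b
        - ((1/2)*(u-((κ-1)*u - κ*lam)/(κ-2))^2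
          + lam * ((1/((κ-1)*lam)) * ((((κ-1)*u - κ*lam)/(κ-2))*κ*lam - (((κ-1)*u - κ*lam)/(κ-2))^2/2 - lam^2/2)))
        = (((κ-1)*(κ-2)^2) * ((lam-b)*(2*u-b-3*lam))/2 + ((κ-1)^2*(κ-2)) * (u-2*lam)^2/2) / ((κ-1)*(κ-2)^2) := by
      field_simp
      ring
    linarith [e, div_nonneg hQ hD.le]
  · rw [if_neg hb1]
    have hb1' : lam < b := not_le.1 hb1
    by_cases hb2 : b ≤ κ*lam
    · rw [if_pos hb2]
      have hQ : (0:ℝ) ≤ (κ-2) * ((κ-2)*b - (κ-1)*u + κ*lam)^2/2 := by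
        nlinarith [mul_nonneg hk2.le (sq_nonneg ((κ-2)*b - (κ-1)*u + κ*lam))]
      have e : (1/2)*(u-b)^2 + lam * ((1/((κ-1)*lam)) * (b*κ*lam - b^2/2 - lam^2/2))
          - ((1/2)*(u-((κ-1)*u - κ*lam)/(κ-2))^2
            + lam * ((1/((κ-1)*lam)) * ((((κ-1)*u - κ*lam)/(κ-2))*κ*lam - (((κ-1)*u - κ*lam)/(κ-2))^2/2 - lam^2/2)))
          = ((κ-2) * ((κ-2)*b - (κ-1)*u + κ*lam)^2/2) / ((κ-1)*(κ-2)^2) := by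
        field_simp
        ring
      linarith [e, div_nonneg hQ hD.le]
    · rw [if_neg hb2]
      have hb2' : κ*lam < b := not_le.1 hb2
      have hQ : (0:ℝ) ≤ ((κ-1)*(κ-2)^2) * ((b-κ*lam)*(b+κ*lam-2*u))/2 + ((κ-1)^2*(κ-2)) * (κ*lam-u)^2/2 := by
        nlinarith [mul_nonneg hD.le
            (mul_nonneg (by linarith : (0:ℝ) ≤ b - κ*lam) (by linarith : (0:ℝ) ≤ b + κ*lam - 2*u)),
          mul_nonneg (mul_nonneg (sq_nonneg (κ-1)) hk2.le) (sq_nonneg (κ*lam-u))]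
      have e : (1/2)*(u-b)^2 + lam * ((lam/2)*(1+κ))
          - ((1/2)*(u-((κ-1)*u - κ*lam)/(κ-2))^2
            + lam * ((1/((κ-1)*lam)) * ((((κ-1)*u - κ*lam)/(κ-2))*κ*lam - (((κ-1)*u - κ*lam)/(κ-2))^2/2 - lam^2/2)))
          = (((κ-1)*(κ-2)^2) * ((b-κ*lam)*(b+κ*lam-2*u))/2 + ((κ-1)^2*(κ-2)) * (κ*lam-u)^2/2) / ((κ-1)*(κ-2)^2) := by
        field_simp
        ring
      linarith [e, div_nonneg hQ hD.le]

lemma scad_key4 (lam κ u b : ℝ) (hlam : 0 < lam) (hκ : 2 < κ) (hu : 0 ≤ u) (hb : 0 ≤ b)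
    (h3 : κ*lam < u) :
    (1/2)*(u-u)^2 + lam * scadCost lam κ u ≤ (1/2)*(u-b)^2 + lam * scadCost lam κ b := by
  have hk1 : (0:ℝ) < κ - 1 := by linarith
  have hk2 : (0:ℝ) < κ - 2 := by linarith
  have hD : (0:ℝ) < (κ-1)*(κ-2)^2 := by positivity
  have hbabs : |b| = b := abs_of_nonneg hb
  have hTa : |u| = u := abs_of_nonneg hu
  have hu1 : ¬ u ≤ lam := by intro h; nlinarith
  have hu2 : ¬ u ≤ κ*lam := not_le.2 h3
  simp only [scadCost, hbabs, hTa, if_neg hu1, if_neg hu2]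
  by_cases hb1 : b ≤ lam
  · rw [if_pos hb1]
    have hQ : (0:ℝ) ≤ ((κ-1)*(κ-2)^2) * ((lam-b)*(2*u-b-3*lam)/2 + (u-κ*lam)*(u+(κ-2)*lam)/2 + (κ-1)*(κ-2)*lam^2/2) := by
      nlinarith [mul_nonneg hD.le
          (mul_nonneg (by linarith : (0:ℝ) ≤ lam - b) (by nlinarith : (0:ℝ) ≤ 2*u-b-3*lam)),
        mul_nonneg hD.le
          (mul_nonneg (by linarith : (0:ℝ) ≤ u - κ*lam) (by nlinarith : (0:ℝ) ≤ u + (κ-2)*lam)),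
        mul_nonneg hD.le (mul_nonneg (mul_nonneg hk1.le hk2.le) (sq_nonneg lam))]
    have e : (1/2)*(u-b)^2 + lam * b - ((1/2)*(u-u)^2 + lam * ((lam/2)*(1+κ)))
        = (((κ-1)*(κ-2)^2) * ((lam-b)*(2*u-b-3*lam)/2 + (u-κ*lam)*(u+(κ-2)*lam)/2 + (κ-1)*(κ-2)*lam^2/2)) / ((κ-1)*(κ-2)^2) := by
      field_simp
      ring
    linarith [e, div_nonneg hQ hD.le]
  · rw [if_neg hb1]
    by_cases hb2 : b ≤ κ*lam
    · rw [if_pos hb2]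
      have haux : (0:ℝ) ≤ 2*(κ-1)*u - (κ-2)*b - κ^2*lam := by
        nlinarith [mul_nonneg hk1.le (by linarith : (0:ℝ) ≤ u - κ*lam),
          mul_nonneg hk2.le (by linarith : (0:ℝ) ≤ κ*lam - b)]
      have hQ : (0:ℝ) ≤ (κ-2)^2 * ((κ*lam-b)*(2*(κ-1)*u - (κ-2)*b - κ^2*lam))/2 + ((κ-1)*(κ-2)^2)*(u-κ*lam)^2/2 := by
        nlinarith [mul_nonneg (sq_nonneg (κ-2))
            (mul_nonneg (by linarith : (0:ℝ) ≤ κ*lam - b) haux),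
          mul_nonneg hD.le (sq_nonneg (u-κ*lam))]
      have e : (1/2)*(u-b)^2 + lam * ((1/((κ-1)*lam)) * (b*κ*lam - b^2/2 - lam^2/2))
          - ((1/2)*(u-u)^2 + lam * ((lam/2)*(1+κ)))
          = ((κ-2)^2 * ((κ*lam-b)*(2*(κ-1)*u - (κ-2)*b - κ^2*lam))/2 + ((κ-1)*(κ-2)^2)*(u-κ*lam)^2/2) / ((κ-1)*(κ-2)^2) := by
        field_simp
        ring
      linarith [e, div_nonneg hQ hD.le]
    · rw [if_neg hb2]
      have hQ : (0:ℝ) ≤ ((κ-1)*(κ-2)^2) * ((u-b)^2/2) := by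
        nlinarith [mul_nonneg hD.le (sq_nonneg (u-b))]
      have e : (1/2)*(u-b)^2 + lam * ((lam/2)*(1+κ)) - ((1/2)*(u-u)^2 + lam * ((lam/2)*(1+κ)))
          = (((κ-1)*(κ-2)^2) * ((u-b)^2/2)) / ((κ-1)*(κ-2)^2) := by
        field_simp
        ring
      linarith [e, div_nonneg hQ hD.le]

lemma scad_key (lam κ : ℝ) (hlam : 0 < lam) (hκ : 2 < κ) (u : ℝ) (hu : 0 ≤ u) (T : ℝ)
    (hT : T = if u ≤ lam then 0 else if u ≤ 2*lam then u - lam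
      else if u ≤ κ*lam then ((κ-1)*u - κ*lam)/(κ-2) else u) :
    ∀ a : ℝ, (1/2)*(u-T)^2 + lam * scadCost lam κ T ≤ (1/2)*(u-a)^2 + lam * scadCost lam κ a := by
  intro a
  have habs : (1/2)*(u-|a|)^2 + lam * scadCost lam κ |a| ≤ (1/2)*(u-a)^2 + lam * scadCost lam κ a := by
    have h1 : scadCost lam κ |a| = scadCost lam κ a := by
      rcases abs_choice a with h | h
      · rw [h]
      · rw [h, scad_neg]
    rw [h1]
    nlinarith [mul_nonneg hu (sub_nonneg.2 (le_abs_self a)), sq_abs a]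
  refine le_trans ?_ habs
  have hb : 0 ≤ |a| := abs_nonneg a
  by_cases h1 : u ≤ lam
  · rw [hT, if_pos h1]
    exact scad_key1 lam κ u |a| hlam hκ hu hb h1
  · by_cases h2 : u ≤ 2*lam
    · rw [hT, if_neg h1, if_pos h2]
      exact scad_key2 lam κ u |a| hlam hκ hu hb (not_le.1 h1) h2
    · by_cases h3 : u ≤ κ*lam
      · rw [hT, if_neg h1, if_neg h2, if_pos h3]
        exact scad_key3 lam κ u |a| hlam hκ hu hb (not_le.1 h2) h3
      · rw [hT, if_neg h1, if_neg h2, if_neg h3]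
        exact scad_key4 lam κ u |a| hlam hκ hu hb (not_le.1 h3)

/-- For `λ > 0`, `κ > 2` and every `u ∈ ℝ`, the SCAD thresholding
value `T(u)` (zero for `|u| ≤ λ`, soft thresholding for `λ ≤ |u| ≤ 2λ`, the
linear transition `((κ−1)u − κλ sign u)/(κ−2)` for `2λ ≤ |u| ≤ κλ`, and the
identity for `|u| ≥ κλ`) is a minimizer of
`f(a) = (1/2)(u − a)² + λ·C_SCAD(a)`. -/
theorem scad_threshold_minimizer (lam κ : ℝ) (hlam : 0 < lam) (hκ : 2 < κ)
    (u : ℝ) (T : ℝ)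
    (hT : T = if |u| ≤ lam then 0
      else if |u| ≤ 2 * lam then u - lam * Real.sign u
      else if |u| ≤ κ * lam then ((κ - 1) * u - κ * lam * Real.sign u) / (κ - 2)
      else u) :
    ∀ a : ℝ,
      (1/2) * (u - T)^2 + lam * scadCost lam κ T ≤
      (1/2) * (u - a)^2 + lam * scadCost lam κ a := by
  intro a
  rcases lt_trichotomy u 0 with hu | hu | hu
  · have hT' : -T = if -u ≤ lam then 0 else if -u ≤ 2*lam then -u - lam
        else if -u ≤ κ*lam then ((κ-1)*(-u) - κ*lam)/(κ-2) else -u := by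
      rw [hT, abs_of_neg hu, Real.sign_of_neg hu]
      split_ifs <;> ring
    have key := scad_key lam κ hlam hκ (-u) (by linarith) (-T) hT' (-a)
    rw [scad_neg, scad_neg,
      show ((-u) - -T)^2 = (u-T)^2 from by ring,
      show ((-u) - -a)^2 = (u-a)^2 from by ring] at key
    linarith [key]
  · subst hu
    have hT' : T = 0 := by
      rw [hT]; simp [hlam.le]
    rw [hT']
    have key := scad_key lam κ hlam hκ 0 le_rfl 0 (by simp [hlam.le]) a
    linarith [key]
  · have hT' : T = if u ≤ lam then 0 else if u ≤ 2*lam then u - lam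
        else if u ≤ κ*lam then ((κ-1)*u - κ*lam)/(κ-2) else u := by
      rw [hT, abs_of_pos hu, Real.sign_of_pos hu]
      split_ifs <;> ring
    exact scad_key lam κ hlam hκ u hu.le T hT' a
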